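/- arXiv:2601.02769 — 3 statements merged into one kernel-verified Lean document; each statement's English description precedes it below -/
import Mathlib

section
/- (Order-statistic concentration, upper deviation.) Let n ≥ 1, let S_1, …, S_n be i.i.d. real-valued random variables, let t ∈ ℝ, set p = P[S_1 ≤ t], let c > 0, and let m ∈ {1, …, n} satisfy m ≤ np − c√(n log n). Let S_{(m)} denote the m-th smallest value among S_1, …, S_n. Then P[S_{(m)} > t] ≤ n^{−2c²}. -/
/-!
Let `N(ω)` be the number of indices `i` with `S_i(ω) ≤ t`. If the `m`-th smallest value exceeds
`t`, then at most `m - 1` of the `S_i` are `≤ t`, so `np - N ≥ c√(n log n)`. The summands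
`p - 1{S_i ≤ t}` are independent, centred and take values in an interval of length `1`, so
Hoeffding's inequality bounds the probability of this deviation by
`exp(-2 (c√(n log n))² / n) = n^{-2c²}`.
-/

open MeasureTheory ProbabilityTheory

/-- The `r`-th smallest value (1-indexed `r`-th order statistic) of a list:
the `r`-th entry of the list sorted in nondecreasing order. -/
noncomputable def orderStat {α : Type*} [LinearOrder α] [Inhabited α]
    (r : ℕ) (l : List α) : α :=
  (l.insertionSort (· ≤ ·)).getD (r - 1) default

open Finset

theorem List.countP_ofFn_eq_card_filter {α : Type*} {n : ℕ} (f : Fin n → α) (q : α → Prop)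
    [DecidablePred q] :
    (List.ofFn f).countP (fun x => decide (q x)) = #{i | q (f i)} := by
  rw [Finset.card_filter]
  induction n with
  | zero => simp
  | succ n ih =>
    rw [List.ofFn_succ, List.countP_cons, Fin.sum_univ_succ, ih, add_comm]
    simp

theorem List.Pairwise.countP_le_le_of_lt_getElem {α : Type*} [LinearOrder α] {l : List α}
    (hl : l.Pairwise (· ≤ ·)) {t : α} {j : ℕ} (hj : j < l.length) (ht : t < l[j]) :
    l.countP (· ≤ t) ≤ j := by
  have hdrop : (l.drop j).countP (· ≤ t) = 0 := by
    have hsorted := hl.sublist (l.drop_sublist j)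
    rw [List.drop_eq_getElem_cons hj, List.pairwise_cons] at hsorted
    rw [List.drop_eq_getElem_cons hj, List.countP_eq_zero]
    rintro x (_ | ⟨_, hx⟩)
    · simpa using ht
    · simpa using ht.trans_le (hsorted.1 x hx)
  calc l.countP (· ≤ t) = (l.take j).countP (· ≤ t) + (l.drop j).countP (· ≤ t) := by
        rw [← List.countP_append, List.take_append_drop]
    _ ≤ j := by
        rw [hdrop, add_zero]
        exact List.countP_le_length.trans (List.length_take_le _ _)

theorem countP_le_le_sub_one_of_lt_orderStat {α : Type*} [LinearOrder α] [Inhabited α]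
    {m : ℕ} {l : List α} (hm : m - 1 < l.length) {t : α} (ht : t < orderStat m l) :
    l.countP (· ≤ t) ≤ m - 1 := by
  have hlen : m - 1 < (l.insertionSort (· ≤ ·)).length := by rwa [List.length_insertionSort]
  rw [orderStat, List.getD_eq_getElem _ _ hlen] at ht
  rw [← (List.perm_insertionSort (· ≤ ·) l).countP_eq]
  exact (List.pairwise_insertionSort _ l).countP_le_le_of_lt_getElem hlen ht

theorem measureReal_card_le_le_exp {Ω ι : Type*} [MeasurableSpace Ω] {P : Measure Ω}
    [IsProbabilityMeasure P] [Fintype ι] {X : ι → Ω → ℝ} (hXmeas : ∀ i, Measurable (X i))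
    (hXindep : iIndepFun X P) {t p : ℝ} (hp : ∀ i, P.real {ω | X i ω ≤ t} = p)
    {s : ℝ} (hs : 0 ≤ s) :
    P.real {ω | (#{i | X i ω ≤ t} : ℝ) ≤ Fintype.card ι * p - s}
      ≤ Real.exp (-2 * s ^ 2 / Fintype.card ι) := by
  set g : ℝ → ℝ := fun x => p - (Set.Iic t).indicator 1 x
  have hg : Measurable g := measurable_const.sub (measurable_one.indicator measurableSet_Iic)
  have hcentred : ∀ i, P[g ∘ X i] = 0 := by
    intro i
    have hA : MeasurableSet {ω | X i ω ≤ t} := measurableSet_le (hXmeas i) measurable_const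
    change ∫ ω, p - {ω | X i ω ≤ t}.indicator (fun _ => (1 : ℝ)) ω ∂P = 0
    rw [integral_sub (integrable_const p) ((integrable_const 1).indicator hA),
      integral_indicator_const _ hA, hp i]
    simp
  have hsubG : ∀ i, HasSubgaussianMGF (g ∘ X i) ((‖p - (p - 1)‖₊ / 2) ^ 2) P := fun i =>
    hasSubgaussianMGF_of_mem_Icc_of_integral_eq_zero (hg.comp (hXmeas i)).aemeasurable
      (ae_of_all _ fun ω => by
        by_cases h : X i ω ≤ t <;> simp [g, Set.indicator_of_mem, Set.indicator_of_notMem, h])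
      (hcentred i)
  have hsum : ∀ ω, ∑ i, (g ∘ X i) ω = Fintype.card ι * p - #{i | X i ω ≤ t} := by
    intro ω
    simp only [g, Function.comp_apply, Finset.sum_sub_distrib, sum_const, card_univ, nsmul_eq_mul,
      natCast_card_filter, Set.indicator_apply, Set.mem_Iic, Pi.one_apply]
  have hevent : {ω | (#{i | X i ω ≤ t} : ℝ) ≤ Fintype.card ι * p - s}
      = {ω | s ≤ ∑ i, (g ∘ X i) ω} := by
    ext ω
    simp only [Set.mem_ofPred_eq, hsum]
    constructor <;> intro h <;> linarith
  calc _ = P.real {ω | s ≤ ∑ i, (g ∘ X i) ω} := by rw [hevent]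
    _ ≤ _ := HasSubgaussianMGF.measure_sum_ge_le_of_iIndepFun
          (hXindep.comp (fun _ => g) fun _ => hg) (fun i _ => hsubG i) hs
    _ = _ := by
        simp only [sub_sub_cancel, nnnorm_one, sum_const, card_univ, nsmul_eq_mul, NNReal.coe_mul,
          NNReal.coe_natCast, NNReal.coe_div, NNReal.coe_pow, NNReal.coe_one, NNReal.coe_ofNat]
        ring_nf

theorem order_statistic_upper_deviation_general
    {Ω : Type*} [MeasurableSpace Ω] (P : Measure Ω) [IsProbabilityMeasure P]
    (n : ℕ) (hn : 1 ≤ n)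
    (S : Fin n → Ω → ℝ)
    (hSmeas : ∀ i, Measurable (S i))
    (hSindep : iIndepFun S P)
    (hSident : ∀ i j, P.map (S i) = P.map (S j))
    (t : ℝ)
    (p : ℝ) (hp : p = (P {ω | S ⟨0, hn⟩ ω ≤ t}).toReal)
    (c : ℝ) (hc : 0 < c)
    (m : ℕ) (hmn : m ≤ n)
    (hm : (m : ℝ) ≤ n * p - c * Real.sqrt (n * Real.log n))
    (Sm : Ω → ℝ)
    (hSm : ∀ ω, Sm ω = orderStat m (List.ofFn fun i : Fin n => S i ω)) :
    P {ω | t < Sm ω} ≤ ENNReal.ofReal ((n : ℝ) ^ (-(2 * c ^ 2))) := by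
  set s := c * Real.sqrt (n * Real.log n)
  have hlogn : 0 ≤ Real.log n := Real.log_nonneg (by exact_mod_cast hn)
  have hpi : ∀ i, P.real {ω | S i ω ≤ t} = p := fun i => by
    rw [hp, ← measureReal_def]
    have h := congrArg (fun μ : Measure ℝ => μ.real (Set.Iic t)) (hSident i ⟨0, hn⟩)
    simp only [map_measureReal_apply (hSmeas _) measurableSet_Iic] at h
    exact h
  have hevent : {ω | t < Sm ω} ⊆ {ω | (#{i | S i ω ≤ t} : ℝ) ≤ Fintype.card (Fin n) * p - s} := by
    intro ω (hω : t < Sm ω)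
    rw [hSm ω] at hω
    have hcount := countP_le_le_sub_one_of_lt_orderStat (by rw [List.length_ofFn]; omega) hω
    rw [List.countP_ofFn_eq_card_filter] at hcount
    have : (#{i | S i ω ≤ t} : ℝ) ≤ m := by exact_mod_cast hcount.trans (Nat.sub_le m 1)
    simp only [Set.mem_ofPred_eq, Fintype.card_fin]
    linarith
  have hrate : Real.exp (-2 * s ^ 2 / Fintype.card (Fin n)) = (n : ℝ) ^ (-(2 * c ^ 2)) := by
    rw [Fintype.card_fin, mul_pow, Real.sq_sqrt (by positivity),
      Real.rpow_def_of_pos (by exact_mod_cast hn)]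
    congr 1
    field_simp
  calc P {ω | t < Sm ω} ≤ _ := measure_mono hevent
    _ = ENNReal.ofReal (P.real _) := (ofReal_measureReal (measure_ne_top P _)).symm
    _ ≤ _ := ENNReal.ofReal_le_ofReal (hrate ▸ measureReal_card_le_le_exp hSmeas hSindep hpi
          (by positivity))

/-- (Order-statistic concentration, upper deviation.) Let `n ≥ 1`, let `S_1, …, S_n` be
i.i.d. real-valued random variables, `t ∈ ℝ`, `p = P[S_1 ≤ t]`, `c > 0`, and let
`m ∈ {1,…,n}` satisfy `m ≤ np - c√(n log n)`. Let `S_(m)` be the `m`-th smallest value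
among `S_1, …, S_n`. Then `P[S_(m) > t] ≤ n^{-2c²}`. -/
theorem order_statistic_upper_deviation
    {Ω : Type*} [MeasurableSpace Ω] (P : Measure Ω) [IsProbabilityMeasure P]
    (n : ℕ) (hn : 1 ≤ n)
    (S : Fin n → Ω → ℝ)
    (hSmeas : ∀ i, Measurable (S i))
    (hSindep : iIndepFun S P)
    (hSident : ∀ i j, P.map (S i) = P.map (S j))
    (t : ℝ)
    (p : ℝ) (hp : p = (P {ω | S ⟨0, hn⟩ ω ≤ t}).toReal)
    (c : ℝ) (hc : 0 < c)
    (m : ℕ) (hm1 : 1 ≤ m) (hmn : m ≤ n)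
    (hm : (m : ℝ) ≤ n * p - c * Real.sqrt (n * Real.log n))
    (Sm : Ω → ℝ)
    (hSm : ∀ ω, Sm ω = orderStat m (List.ofFn fun i : Fin n => S i ω)) :
    P {ω | t < Sm ω} ≤ ENNReal.ofReal ((n : ℝ) ^ (-(2 * c ^ 2))) :=
  order_statistic_upper_deviation_general P n hn S hSmeas hSindep hSident t p hp c hc m hmn hm Sm
    hSm
end

section
/- (Order-statistic concentration, lower deviation.) Let n ≥ 1, let S_1, …, S_n be i.i.d. real-valued random variables, let t ∈ ℝ, set p = P[S_1 ≤ t], let c > 0, and let m ∈ {1, …, n} satisfy m ≥ np + c√(n log n). Let S_{(m)} denote the m-th smallest value among S_1, …, S_n. Then P[S_{(m)} ≤ t] ≤ n^{−2c²}. -/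
/-!
If `S_(m) ≤ t`, then at least `m` of the `S_i` are `≤ t`. The indicators `1{S_i ≤ t}` are
independent with mean `p` and values in `[0, 1]`, so by Hoeffding's inequality their sum reaches
`np + ε` with probability at most `exp(-2ε²/n)`; with `ε = m - np ≥ c√(n log n)` this is at most
`n^{-2c²}`.
-/

open MeasureTheory ProbabilityTheory

open Finset Real

theorem List.countP_ofFn {α : Type*} {n : ℕ} (f : Fin n → α) (p : α → Prop) [DecidablePred p] :
    (List.ofFn f).countP (fun x => decide (p x)) = #{i | p (f i)} := by
  rw [← Multiset.coe_countP, ← Fin.univ_val_map, Multiset.countP_map, card_def, filter_val]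

lemma le_countP_of_orderStat_le {α : Type*} [LinearOrder α] [Inhabited α] {r : ℕ} {l : List α}
    (hr : r ≤ l.length) {t : α} (h : orderStat r l ≤ t) :
    r ≤ l.countP (fun x => decide (x ≤ t)) := by
  set s := l.insertionSort (· ≤ ·)
  have hlen : s.length = l.length := List.length_insertionSort _ _
  have hprefix : ∀ x ∈ s.take r, x ≤ t := by
    intro x hx
    obtain ⟨j, hj, rfl⟩ := List.getElem_of_mem hx
    rw [List.length_take] at hj
    calc (s.take r)[j] = s[j] := List.getElem_take ..
      _ ≤ s[r - 1] := List.sortedLE_insertionSort.getElem_le_getElem_of_le (by omega)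
      _ = orderStat r l := (List.getD_eq_getElem _ _ _).symm
      _ ≤ t := h
  calc r = (s.take r).countP (fun x => decide (x ≤ t)) := by
        rw [List.countP_eq_length.mpr (by simpa using hprefix), List.length_take]; omega
    _ ≤ s.countP (fun x => decide (x ≤ t)) := (List.take_sublist r s).countP_le
    _ = l.countP (fun x => decide (x ≤ t)) := (List.perm_insertionSort _ l).countP_eq _

section Hoeffding

variable {Ω α : Type*} [MeasurableSpace Ω] {P : Measure Ω} [IsProbabilityMeasure P]
  [MeasurableSpace α] {s : Set α}

lemma hasSubgaussianMGF_indicator_sub_measureReal {Y : Ω → α} (hY : Measurable Y)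
    (hs : MeasurableSet s) :
    HasSubgaussianMGF (fun ω => s.indicator 1 (Y ω) - P.real (Y ⁻¹' s)) (1 / 4) P := by
  have hmeas : Measurable fun ω => s.indicator (1 : α → ℝ) (Y ω) :=
    (measurable_const.indicator hs).comp hY
  have hint : P[fun ω => s.indicator (1 : α → ℝ) (Y ω)] = P.real (Y ⁻¹' s) := by
    simp_rw [← Set.indicator_comp_right]
    exact integral_indicator_one (hY hs)
  have h := hasSubgaussianMGF_of_mem_Icc (a := 0) (b := 1) hmeas.aemeasurable
    (ae_of_all P fun ω => by by_cases h : Y ω ∈ s <;> simp [h])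
  rw [hint] at h
  convert h using 1
  norm_num

lemma measureReal_card_filter_mem_ge_le {ι : Type*} [Fintype ι] {S : ι → Ω → α}
    [DecidablePred (· ∈ s)] (hS : ∀ i, Measurable (S i)) (hindep : iIndepFun S P)
    (hs : MeasurableSet s) {p : ℝ} (hp : ∀ i, P.real (S i ⁻¹' s) = p) {ε : ℝ} (hε : 0 ≤ ε) :
    P.real {ω | Fintype.card ι * p + ε ≤ #{i | S i ω ∈ s}}
      ≤ exp (-2 * ε ^ 2 / Fintype.card ι) := by
  set X : ι → Ω → ℝ := fun i ω => s.indicator 1 (S i ω) - p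
  have hX : iIndepFun X P := hindep.comp (fun _ y => s.indicator 1 y - p)
    (fun _ => (measurable_const.indicator hs).sub_const p)
  have hsubG (i : ι) (_ : i ∈ univ) : HasSubgaussianMGF (X i) (1 / 4) P := by
    simpa only [X, hp] using hasSubgaussianMGF_indicator_sub_measureReal (P := P) (hS i) hs
  have hsum (ω : Ω) : ∑ i, X i ω = #{i | S i ω ∈ s} - Fintype.card ι * p := by
    simp [X, Set.indicator_apply, sum_sub_distrib]
  convert HasSubgaussianMGF.measure_sum_ge_le_of_iIndepFun hX hsubG hε using 2
  · ext ω
    simp only [Set.mem_ofPred_eq, hsum]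
    constructor <;> intro h <;> linarith
  · simp; ring

end Hoeffding

lemma exp_neg_two_mul_sq_div_le_rpow {x c ε : ℝ} (hx : 0 < x) (hc : 0 ≤ c)
    (h : c * √(x * log x) ≤ ε) : exp (-2 * ε ^ 2 / x) ≤ x ^ (-(2 * c ^ 2)) := by
  have hsq : c ^ 2 * (x * log x) ≤ ε ^ 2 :=
    calc c ^ 2 * (x * log x) ≤ c ^ 2 * √(x * log x) ^ 2 := by
          rw [Real.sq_sqrt']; gcongr; exact le_max_left _ _
      _ = (c * √(x * log x)) ^ 2 := by ring
      _ ≤ ε ^ 2 := pow_le_pow_left₀ (by positivity) h 2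
  rw [rpow_def_of_pos hx, exp_le_exp, div_le_iff₀ hx]
  linarith

theorem order_statistic_lower_deviation_general
    {Ω : Type*} [MeasurableSpace Ω] (P : Measure Ω) [IsProbabilityMeasure P]
    (n : ℕ) (hn : 1 ≤ n)
    (S : Fin n → Ω → ℝ)
    (hSmeas : ∀ i, Measurable (S i))
    (hSindep : iIndepFun S P)
    (hSident : ∀ i j, P.map (S i) = P.map (S j))
    (t : ℝ)
    (p : ℝ) (hp : p = (P {ω | S ⟨0, hn⟩ ω ≤ t}).toReal)
    (c : ℝ) (hc : 0 < c)
    (m : ℕ) (hmn : m ≤ n)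
    (hm : (n : ℝ) * p + c * Real.sqrt (n * Real.log n) ≤ (m : ℝ))
    (Sm : Ω → ℝ)
    (hSm : ∀ ω, Sm ω = orderStat m (List.ofFn fun i : Fin n => S i ω)) :
    P {ω | Sm ω ≤ t} ≤ ENNReal.ofReal ((n : ℝ) ^ (-(2 * c ^ 2))) := by
  have hpi (i : Fin n) : P.real (S i ⁻¹' Set.Iic t) = p := by
    rw [hp, measureReal_def, ← Measure.map_apply (hSmeas i) measurableSet_Iic,
      hSident i ⟨0, hn⟩, Measure.map_apply (hSmeas _) measurableSet_Iic]
    rfl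
  have hdev : c * √(n * log n) ≤ m - n * p := by linarith
  have hcount : {ω | Sm ω ≤ t}
      ⊆ {ω | Fintype.card (Fin n) * p + (m - n * p) ≤ #{i | S i ω ∈ Set.Iic t}} := by
    intro ω (hω : Sm ω ≤ t)
    rw [hSm] at hω
    have := le_countP_of_orderStat_le (by simpa using hmn) hω
    rw [List.countP_ofFn] at this
    simpa using (Nat.cast_le (α := ℝ)).mpr this
  calc P {ω | Sm ω ≤ t}
      ≤ P {ω | Fintype.card (Fin n) * p + (m - n * p) ≤ #{i | S i ω ∈ Set.Iic t}} :=
        measure_mono hcount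
    _ = ENNReal.ofReal (P.real _) := (ofReal_measureReal).symm
    _ ≤ ENNReal.ofReal (exp (-2 * (m - n * p) ^ 2 / n)) := by
        gcongr
        simpa using measureReal_card_filter_mem_ge_le hSmeas hSindep measurableSet_Iic hpi
          ((by positivity : 0 ≤ c * √(n * log n)).trans hdev)
    _ ≤ ENNReal.ofReal ((n : ℝ) ^ (-(2 * c ^ 2))) := by
        gcongr
        exact exp_neg_two_mul_sq_div_le_rpow (by positivity) hc.le hdev

/-- (Order-statistic concentration, lower deviation.) Let `n ≥ 1`, let `S_1, …, S_n` be
i.i.d. real-valued random variables, `t ∈ ℝ`, `p = P[S_1 ≤ t]`, `c > 0`, and let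
`m ∈ {1,…,n}` satisfy `m ≥ np + c√(n log n)`. Let `S_(m)` be the `m`-th smallest value
among `S_1, …, S_n`. Then `P[S_(m) ≤ t] ≤ n^{-2c²}`. -/
theorem order_statistic_lower_deviation
    {Ω : Type*} [MeasurableSpace Ω] (P : Measure Ω) [IsProbabilityMeasure P]
    (n : ℕ) (hn : 1 ≤ n)
    (S : Fin n → Ω → ℝ)
    (hSmeas : ∀ i, Measurable (S i))
    (hSindep : iIndepFun S P)
    (hSident : ∀ i j, P.map (S i) = P.map (S j))
    (t : ℝ)
    (p : ℝ) (hp : p = (P {ω | S ⟨0, hn⟩ ω ≤ t}).toReal)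
    (c : ℝ) (hc : 0 < c)
    (m : ℕ) (hm1 : 1 ≤ m) (hmn : m ≤ n)
    (hm : (n : ℝ) * p + c * Real.sqrt (n * Real.log n) ≤ (m : ℝ))
    (Sm : Ω → ℝ)
    (hSm : ∀ ω, Sm ω = orderStat m (List.ofFn fun i : Fin n => S i ω)) :
    P {ω | Sm ω ≤ t} ≤ ENNReal.ofReal ((n : ℝ) ^ (-(2 * c ^ 2))) :=
  order_statistic_lower_deviation_general P n hn S hSmeas hSindep hSident t p hp c hc m hmn hm Sm
    hSm
end

section
/- (Theorem 2, first claim: asymptotic optimality of the CIR threshold.) For each n ≥ 1, let (X_1, Y_1), …, (X_n, Y_n), (X, Y) be i.i.d. random pairs with values in ℝ^d × ℝ, and let F(y | x) denote a regular conditional cumulative distribution function of Y given X = x. Let ρ_n ∈ (0,1) with ρ_n → 0, set T_n = ⌈ρ_n^{−1}⌉, and fix measurable functions q̂_0, …, q̂_{T_n} : ℝ^d → ℝ with q̂_0(x) ≤ … ≤ q̂_{T_n}(x) for all x, satisfying the consistency condition max_{0 ≤ t ≤ T_n} E[(t/T_n − F(q̂_t(X) | X))²] ≤ ρ_n². Fix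 measurable functions l_k : ℝ^d → {0, …, T_n − k}, k = 1, …, T_n, such that q̂_{l_k(x)+k}(x) − q̂_{l_k(x)}(x) = min_{0 ≤ l ≤ T_n − k} (q̂_{l+k}(x) − q̂_l(x)), define C_k(x) = (q̂_{l_k(x)}(x), q̂_{l_k(x)+k}(x)], and assume the nestedness (unimodality) condition C_k(x) ⊆ C_{k+1}(x) for all 1 ≤ k < T_n and all x. Let α ∈ (0,1), let k_i = min{k : Y_i ∈ C_k(X_i)} (with k_i = T_n if Y_i ∉ C_{T_n}(X_i)), and let k̂_n be the ⌈(1−α)(n+1)⌉-th smallest value among k_1, …, k_n. Then k̂_n / T_n converges in probability to 1 − α: for every ε > 0, lim_{n→∞} P[|k̂_n / T_n − (1 − α)| > ε] = 0. -/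
/-!
Write `A_c = {(x, y) | y ∈ C_c(x)}`. By nestedness, `k_i ≤ c` iff `(X_i, Y_i) ∈ A_c`, so
`k̂_n ≤ c` iff at least `⌈(1 - α)(n + 1)⌉` of `n` independent events of probability `μ(A_c)` occur.
Disintegrating `μ` along `x` gives `μ(A_c) = E[F(q̂_{l_c(X) + c}(X) | X) - F(q̂_{l_c(X)}(X) | X)]`;
bounding the calibration error at the random index `l_c(X)` by the sum of the errors over all
`T_n + 1` levels, the consistency condition yields `|μ(A_c) - c / T_n| ≤ 2 √((T_n + 1) ρ_n²)`,
which is at most `2 √(3 ρ_n) → 0`. Chebyshev's inequality for the count of these events at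
`c = ⌊(1 - α ± ε) T_n⌋` then bounds `P[k̂_n / T_n ≷ 1 - α ± ε]` by `4 / (n ε²)`.
-/

open MeasureTheory ProbabilityTheory Filter

section OrderStatistics

variable {α : Type*} [LinearOrder α]

theorem List.SortedLE.getElem_le_iff_le_countP {s : List α} (hs : s.SortedLE) {r : ℕ}
    (hr : 1 ≤ r) (hrs : r ≤ s.length) (c : α) :
    s[r - 1] ≤ c ↔ r ≤ s.countP (· ≤ c) := by
  constructor
  · intro h
    have htake : ∀ a ∈ s.take r, a ≤ c := by
      intro a ha
      obtain ⟨i, hi, rfl⟩ := List.mem_iff_getElem.mp ha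
      rw [List.getElem_take]
      exact (hs.getElem_le_getElem_of_le (by simp only [List.length_take] at hi; omega)).trans h
    calc r = (s.take r).countP (· ≤ c) := by
          rw [List.countP_eq_length.mpr (by simpa using htake)]; simp [hrs]
      _ ≤ s.countP (· ≤ c) := (List.take_sublist r s).countP_le
  · intro h
    by_contra! hc
    have hdrop : (s.drop (r - 1)).countP (· ≤ c) = 0 := by
      refine List.countP_eq_zero.mpr fun a ha => ?_
      obtain ⟨i, hi, rfl⟩ := List.mem_iff_getElem.mp ha
      rw [List.getElem_drop]
      simpa using hc.trans_le (hs.getElem_le_getElem_of_le (Nat.le_add_right _ _))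
    have hsplit := List.countP_append (p := (· ≤ c)) (l₁ := s.take (r - 1)) (l₂ := s.drop (r - 1))
    rw [List.take_append_drop, hdrop] at hsplit
    have := (s.take (r - 1)).countP_le_length (p := (· ≤ c))
    simp only [List.length_take] at this
    omega

variable [Inhabited α]

theorem orderStat_le_iff {L : List α} {r : ℕ} (hr : 1 ≤ r) (hrL : r ≤ L.length) (c : α) :
    orderStat r L ≤ c ↔ r ≤ L.countP (· ≤ c) := by
  have hperm := L.perm_insertionSort (· ≤ ·)
  have hlt : r - 1 < (L.insertionSort (· ≤ ·)).length := by rw [hperm.length_eq]; omega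
  rw [orderStat, List.getD_eq_getElem _ _ hlt, ← hperm.countP_eq,
    List.sortedLE_insertionSort.getElem_le_iff_le_countP hr (by omega)]

theorem orderStat_mem {L : List α} {r : ℕ} (hr : 1 ≤ r) (hrL : r ≤ L.length) :
    orderStat r L ∈ L := by
  have hperm := L.perm_insertionSort (· ≤ ·)
  have hlt : r - 1 < (L.insertionSort (· ≤ ·)).length := by rw [hperm.length_eq]; omega
  rw [orderStat, List.getD_eq_getElem _ _ hlt]
  exact hperm.mem_iff.mp (List.getElem_mem hlt)

end OrderStatistics

theorem List.countP_ofFn_s12 {α : Type*} {n : ℕ} (f : Fin n → α) (p : α → Bool) :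
    (List.ofFn f).countP p = ∑ i, if p (f i) then 1 else 0 := by
  induction n with
  | zero => simp
  | succ n ih => rw [List.ofFn_succ, List.countP_cons, ih, Fin.sum_univ_succ, add_comm]

theorem ProbabilityTheory.IndepSet.indepFun_indicator {Ω : Type*} [MeasurableSpace Ω]
    {P : Measure Ω} {s t : Set Ω} (h : IndepSet s t P) :
    IndepFun (s.indicator (1 : Ω → ℝ)) (t.indicator (1 : Ω → ℝ)) P := by
  rw [IndepFun_iff_Indep]
  refine indep_of_indep_of_le_right (indep_of_indep_of_le_left h ?_) ?_ <;>
    exact (Measurable.indicator (m := .generateFrom _) (f := 1) measurable_const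
      (MeasurableSpace.measurableSet_generateFrom (Set.mem_singleton _))).comap_le

section Concentration

variable {Ω : Type*} [MeasurableSpace Ω] {P : Measure Ω} [IsProbabilityMeasure P]

theorem measure_le_abs_sum_sub_sum_integral_le {ι : Type*} [Fintype ι] {B : ι → Ω → ℝ}
    (hB : ∀ i, Measurable (B i)) (hB01 : ∀ i ω, B i ω ∈ Set.Icc 0 1)
    (hindep : Pairwise fun i j => IndepFun (B i) (B j) P) {a : ℝ} (ha : 0 < a) :
    P {ω | a ≤ |∑ i, B i ω - ∑ i, ∫ ω', B i ω' ∂P|}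
      ≤ ENNReal.ofReal (Fintype.card ι / (4 * a ^ 2)) := by
  have hmem : ∀ i, MemLp (B i) 2 P := fun i =>
    memLp_of_bounded (.of_forall (hB01 i)) (hB i).aestronglyMeasurable 2
  have hvar : variance (∑ i, B i) P ≤ Fintype.card ι / 4 := by
    rw [IndepFun.variance_sum (fun i _ => hmem i) fun i _ j _ hij => hindep hij]
    calc ∑ i, variance (B i) P ≤ ∑ _i : ι, ((1 - 0) / 2 : ℝ) ^ 2 :=
          Finset.sum_le_sum fun i _ =>
            variance_le_sq_of_bounded (.of_forall (hB01 i)) (hB i).aemeasurable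
      _ = Fintype.card ι / 4 := by
        simp only [Finset.sum_const, Finset.card_univ, nsmul_eq_mul]; ring
  have hmean : ∫ ω, (∑ i, B i) ω ∂P = ∑ i, ∫ ω, B i ω ∂P := by
    simp only [Finset.sum_apply]
    exact integral_finsetSum _ fun i _ => (hmem i).integrable one_le_two
  calc P {ω | a ≤ |∑ i, B i ω - ∑ i, ∫ ω', B i ω' ∂P|}
      = P {ω | a ≤ |(∑ i, B i) ω - ∫ ω', (∑ i, B i) ω' ∂P|} := by
        rw [hmean]; simp only [Finset.sum_apply]
    _ ≤ ENNReal.ofReal (variance (∑ i, B i) P / a ^ 2) :=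
        meas_ge_le_variance_div_sq (memLp_finsetSum' _ fun i _ => hmem i) ha
    _ ≤ ENNReal.ofReal (Fintype.card ι / 4 / a ^ 2) := by gcongr
    _ = ENNReal.ofReal (Fintype.card ι / (4 * a ^ 2)) := by rw [div_div]

variable {n : ℕ} {Z : Fin n → Ω → ℕ} {c : ℕ}

theorem measure_le_abs_countP_sub_le (hZ : ∀ i, MeasurableSet {ω | Z i ω ≤ c})
    (hindep : Pairwise fun i j => IndepSet {ω | Z i ω ≤ c} {ω | Z j ω ≤ c} P)
    {a : ℝ} (ha : 0 < a) :
    P {ω | a ≤ |((List.ofFn fun i => Z i ω).countP (· ≤ c) : ℝ)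
        - ∑ i, P.real {ω | Z i ω ≤ c}|} ≤ ENNReal.ofReal (n / (4 * a ^ 2)) := by
  have hcount : ∀ ω, ((List.ofFn fun i => Z i ω).countP (· ≤ c) : ℝ)
      = ∑ i, {ω | Z i ω ≤ c}.indicator (1 : Ω → ℝ) ω := by
    intro ω
    simp [List.countP_ofFn_s12, Set.indicator_apply, Finset.sum_boole]
  simpa [hcount, integral_indicator_one (hZ _)] using
    measure_le_abs_sum_sub_sum_integral_le (P := P) (fun i => measurable_one.indicator (hZ i))
      (fun i ω => by by_cases h : Z i ω ≤ c <;> simp [h])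
      (fun i j hij => (hindep hij).indepFun_indicator) ha

variable {r T : ℕ} {δ ε : ℝ}

theorem measure_lt_orderStat_div_le (hr : 1 ≤ r) (hrn : r ≤ n)
    (hZ : ∀ c, 1 ≤ c → c < T → ∀ i, MeasurableSet {ω | Z i ω ≤ c})
    (hindep : ∀ c, 1 ≤ c → c < T →
      Pairwise fun i j => IndepSet {ω | Z i ω ≤ c} {ω | Z j ω ≤ c} P)
    (hcov : ∀ c, 1 ≤ c → c < T → ∀ i, |P.real {ω | Z i ω ≤ c} - c / T| ≤ δ)
    {β : ℝ} (hβ : β < 1) (hβT : 1 ≤ β * T) (hδT : δ + (T : ℝ)⁻¹ ≤ ε / 4) (hε : 0 < ε)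
    (hrβ : r + n * ε / 2 ≤ n * β) :
    P {ω | β < ((orderStat r (List.ofFn fun i => Z i ω) : ℕ) : ℝ) / T}
      ≤ ENNReal.ofReal (4 / ε ^ 2 / n) := by
  have hT0 : 0 < (T : ℝ) := by by_contra! h; nlinarith
  have hn : 0 < (n : ℝ) := by norm_cast; omega
  set c := ⌊β * T⌋₊
  have hc1 : 1 ≤ c := Nat.le_floor (by simpa using hβT)
  have hcT : c < T := (Nat.floor_lt (by positivity)).mpr (by nlinarith)
  have hcβ : β - (T : ℝ)⁻¹ ≤ c / T := by
    rw [le_div_iff₀ hT0, sub_mul, inv_mul_cancel₀ hT0.ne']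
    exact (Nat.sub_one_lt_floor _).le
  have hra : r + n * ε / 4 ≤ n * (c / T - δ) := by
    nlinarith [mul_le_mul_of_nonneg_left (show β - ε / 4 ≤ c / T - δ by linarith) hn.le]
  have hcount : ∀ ω, (List.ofFn fun i => Z i ω).countP (· ≤ c) + 1 ≤ r →
      n * ε / 4 ≤ |((List.ofFn fun i => Z i ω).countP (· ≤ c) : ℝ)
        - ∑ i, P.real {ω | Z i ω ≤ c}| := by
    intro ω h
    have hsum := Finset.sum_le_sum fun i (_ : i ∈ Finset.univ) =>
      (show c / T - δ ≤ P.real {ω | Z i ω ≤ c} by linarith [(abs_le.mp (hcov c hc1 hcT i)).1])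
    simp only [Finset.sum_const, Finset.card_univ, Fintype.card_fin, nsmul_eq_mul] at hsum
    rw [abs_sub_comm]
    refine le_abs.mpr (Or.inl ?_)
    have : ((List.ofFn fun i => Z i ω).countP (· ≤ c) : ℝ) + 1 ≤ r := by exact_mod_cast h
    linarith
  refine (measure_mono fun ω hω => hcount ω ?_).trans
    ((measure_le_abs_countP_sub_le (hZ c hc1 hcT) (hindep c hc1 hcT) (by positivity)).trans_eq
      (by congr 1; field_simp))
  rw [Set.mem_ofPred_eq, lt_div_iff₀ hT0, ← Nat.floor_lt (by positivity), ← not_le,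
    orderStat_le_iff hr (by simpa using hrn)] at hω
  exact Nat.succ_le_of_lt (not_le.mp hω)

theorem measure_orderStat_div_lt_le (hr : 1 ≤ r) (hrn : r ≤ n)
    (hZ : ∀ c, 1 ≤ c → c < T → ∀ i, MeasurableSet {ω | Z i ω ≤ c})
    (hindep : ∀ c, 1 ≤ c → c < T →
      Pairwise fun i j => IndepSet {ω | Z i ω ≤ c} {ω | Z j ω ≤ c} P)
    (hcov : ∀ c, 1 ≤ c → c < T → ∀ i, |P.real {ω | Z i ω ≤ c} - c / T| ≤ δ)
    {β : ℝ} (hβ : β < 1) (hβT : 1 ≤ β * T) (hδ : δ ≤ ε / 4) (hε : 0 < ε)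
    (hrβ : n * β + n * ε / 2 ≤ r) :
    P {ω | ((orderStat r (List.ofFn fun i => Z i ω) : ℕ) : ℝ) / T < β}
      ≤ ENNReal.ofReal (4 / ε ^ 2 / n) := by
  have hT0 : 0 < (T : ℝ) := by by_contra! h; nlinarith
  have hn : 0 < (n : ℝ) := by norm_cast; omega
  set c := ⌊β * T⌋₊
  have hc1 : 1 ≤ c := Nat.le_floor (by simpa using hβT)
  have hcT : c < T := (Nat.floor_lt (by positivity)).mpr (by nlinarith)
  have hcβ : c / T ≤ β := by
    rw [div_le_iff₀ hT0]
    exact Nat.floor_le (by positivity)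
  have hcount : ∀ ω, r ≤ (List.ofFn fun i => Z i ω).countP (· ≤ c) →
      n * ε / 4 ≤ |((List.ofFn fun i => Z i ω).countP (· ≤ c) : ℝ)
        - ∑ i, P.real {ω | Z i ω ≤ c}| := by
    intro ω h
    have hsum := Finset.sum_le_sum fun i (_ : i ∈ Finset.univ) =>
      (show P.real {ω | Z i ω ≤ c} ≤ c / T + δ by linarith [(abs_le.mp (hcov c hc1 hcT i)).2])
    simp only [Finset.sum_const, Finset.card_univ, Fintype.card_fin, nsmul_eq_mul] at hsum
    refine le_abs.mpr (Or.inl ?_)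
    have : (r : ℝ) ≤ (List.ofFn fun i => Z i ω).countP (· ≤ c) := by exact_mod_cast h
    nlinarith [mul_le_mul_of_nonneg_left (show c / T + δ ≤ β + ε / 4 by linarith) hn.le]
  refine (measure_mono fun ω hω => hcount ω ?_).trans
    ((measure_le_abs_countP_sub_le (hZ c hc1 hcT) (hindep c hc1 hcT) (by positivity)).trans_eq
      (by congr 1; field_simp))
  rw [Set.mem_ofPred_eq, div_lt_iff₀ hT0] at hω
  exact (orderStat_le_iff hr (by simpa using hrn) c).mp (Nat.le_floor hω.le)

end Concentration

section OrderStatisticConsistency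

variable {Ω : Type*} [MeasurableSpace Ω] {P : Measure Ω} [IsProbabilityMeasure P]
  {α ε : ℝ} {T : ℕ → ℕ} {δ : ℕ → ℝ} {Z : (n : ℕ) → Fin n → Ω → ℕ}

theorem eventually_natCeil_mul_add_one_le (hα : 0 < α) :
    ∀ᶠ n : ℕ in atTop, ⌈(1 - α) * (n + 1)⌉₊ ≤ n := by
  filter_upwards [((tendsto_natCast_atTop_atTop.atTop_add
    (tendsto_const_nhds (x := (1 : ℝ)))).const_mul_atTop hα).eventually_ge_atTop 1] with n hn
  exact Nat.ceil_le.mpr (by linarith)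

theorem eventually_measure_lt_orderStat_div_le (hα : α ∈ Set.Ioo 0 1)
    (hT : Tendsto T atTop atTop) (hδ : Tendsto δ atTop (nhds 0)) (hZT : ∀ n i ω, Z n i ω ≤ T n)
    (hZ : ∀ n c, 1 ≤ c → c < T n → ∀ i, MeasurableSet {ω | Z n i ω ≤ c})
    (hindep : ∀ n c, 1 ≤ c → c < T n →
      Pairwise fun i j => IndepSet {ω | Z n i ω ≤ c} {ω | Z n j ω ≤ c} P)
    (hcov : ∀ᶠ n in atTop, ∀ c, 1 ≤ c → c < T n → ∀ i,
      |P.real {ω | Z n i ω ≤ c} - c / T n| ≤ δ n)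
    (hε : 0 < ε) :
    ∀ᶠ n : ℕ in atTop, P {ω | 1 - α + ε <
      ((orderStat ⌈(1 - α) * (n + 1)⌉₊ (List.ofFn fun i => Z n i ω) : ℕ) : ℝ) / T n}
        ≤ ENNReal.ofReal (4 / ε ^ 2 / n) := by
  obtain ⟨hα0, hα1⟩ := hα
  have hTR : Tendsto (fun n => (T n : ℝ)) atTop atTop := tendsto_natCast_atTop_atTop.comp hT
  have hsmall : Tendsto (fun n => δ n + (T n : ℝ)⁻¹) atTop (nhds 0) := by
    simpa using hδ.add (tendsto_inv_atTop_zero.comp hTR)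
  filter_upwards [hcov, eventually_natCeil_mul_add_one_le hα0,
    (hTR.const_mul_atTop (by linarith : 0 < 1 - α + ε)).eventually_ge_atTop 1,
    hsmall.eventually_le_const (by positivity : 0 < ε / 4),
    (tendsto_natCast_atTop_atTop.atTop_mul_const hε).eventually_ge_atTop 4]
    with n hcov hrn hTc hδT hnε
  have hr : 1 ≤ ⌈(1 - α) * (n + 1)⌉₊ := Nat.ceil_pos.mpr (mul_pos (by linarith) (by positivity))
  by_cases hβ : 1 - α + ε < 1
  · refine measure_lt_orderStat_div_le hr hrn (hZ n) (hindep n) hcov hβ hTc hδT hε ?_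
    nlinarith [Nat.ceil_lt_add_one (show 0 ≤ (1 - α) * (n + 1) by nlinarith)]
  · have hempty : {ω | 1 - α + ε < ((orderStat ⌈(1 - α) * (n + 1)⌉₊
        (List.ofFn fun i => Z n i ω) : ℕ) : ℝ) / T n} = ∅ := by
      refine Set.eq_empty_of_forall_notMem fun ω hω => hβ ?_
      obtain ⟨i, hi⟩ := (List.mem_ofFn' _ _).mp
        (orderStat_mem (L := List.ofFn fun i => Z n i ω) hr (by simpa using hrn))
      have hle : ((orderStat ⌈(1 - α) * (n + 1)⌉₊ (List.ofFn fun i => Z n i ω) : ℕ) : ℝ)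
          ≤ T n := by
        rw [← hi]; exact_mod_cast hZT n i ω
      exact (Set.mem_ofPred_eq ▸ hω).trans_le (div_le_one_of_le₀ hle (Nat.cast_nonneg _))
    simp [hempty]

theorem eventually_measure_orderStat_div_lt_le (hα : α ∈ Set.Ioo 0 1)
    (hT : Tendsto T atTop atTop) (hδ : Tendsto δ atTop (nhds 0))
    (hZ : ∀ n c, 1 ≤ c → c < T n → ∀ i, MeasurableSet {ω | Z n i ω ≤ c})
    (hindep : ∀ n c, 1 ≤ c → c < T n →
      Pairwise fun i j => IndepSet {ω | Z n i ω ≤ c} {ω | Z n j ω ≤ c} P)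
    (hcov : ∀ᶠ n in atTop, ∀ c, 1 ≤ c → c < T n → ∀ i,
      |P.real {ω | Z n i ω ≤ c} - c / T n| ≤ δ n)
    (hε : 0 < ε) :
    ∀ᶠ n : ℕ in atTop, P {ω |
      ((orderStat ⌈(1 - α) * (n + 1)⌉₊ (List.ofFn fun i => Z n i ω) : ℕ) : ℝ) / T n < 1 - α - ε}
        ≤ ENNReal.ofReal (4 / ε ^ 2 / n) := by
  obtain ⟨hα0, hα1⟩ := hα
  by_cases hγ : 0 < 1 - α - ε
  swap
  · refine .of_forall fun n => ?_
    have hempty : {ω | ((orderStat ⌈(1 - α) * (n + 1)⌉₊ (List.ofFn fun i => Z n i ω) : ℕ) : ℝ)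
        / T n < 1 - α - ε} = ∅ :=
      Set.eq_empty_of_forall_notMem fun ω hω => hγ ((div_nonneg (Nat.cast_nonneg _)
        (Nat.cast_nonneg _)).trans_lt (Set.mem_ofPred_eq ▸ hω))
    simp [hempty]
  have hTR : Tendsto (fun n => (T n : ℝ)) atTop atTop := tendsto_natCast_atTop_atTop.comp hT
  filter_upwards [hcov, eventually_natCeil_mul_add_one_le hα0,
    (hTR.const_mul_atTop hγ).eventually_ge_atTop 1,
    hδ.eventually_le_const (by positivity : 0 < ε / 4)] with n hcov hrn hTc hδε
  have hr : 1 ≤ ⌈(1 - α) * (n + 1)⌉₊ := Nat.ceil_pos.mpr (mul_pos (by linarith) (by positivity))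
  refine measure_orderStat_div_lt_le hr hrn (hZ n) (hindep n) hcov (by linarith) hTc hδε hε ?_
  nlinarith [Nat.le_ceil ((1 - α) * (n + 1)), (Nat.cast_nonneg n : (0 : ℝ) ≤ n)]

theorem tendsto_measure_lt_abs_orderStat_div_sub (hα : α ∈ Set.Ioo 0 1)
    (hT : Tendsto T atTop atTop) (hδ : Tendsto δ atTop (nhds 0)) (hZT : ∀ n i ω, Z n i ω ≤ T n)
    (hZ : ∀ n c, 1 ≤ c → c < T n → ∀ i, MeasurableSet {ω | Z n i ω ≤ c})
    (hindep : ∀ n c, 1 ≤ c → c < T n →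
      Pairwise fun i j => IndepSet {ω | Z n i ω ≤ c} {ω | Z n j ω ≤ c} P)
    (hcov : ∀ᶠ n in atTop, ∀ c, 1 ≤ c → c < T n → ∀ i,
      |P.real {ω | Z n i ω ≤ c} - c / T n| ≤ δ n)
    (hε : 0 < ε) :
    Tendsto (fun n : ℕ => P {ω | ε < |((orderStat ⌈(1 - α) * (n + 1)⌉₊
      (List.ofFn fun i => Z n i ω) : ℕ) : ℝ) / T n - (1 - α)|}) atTop (nhds 0) := by
  have hbound : Tendsto (fun n : ℕ => ENNReal.ofReal (4 / ε ^ 2 / n)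
      + ENNReal.ofReal (4 / ε ^ 2 / n)) atTop (nhds 0) := by
    simpa using (ENNReal.tendsto_ofReal (tendsto_const_div_atTop_nhds_zero_nat (4 / ε ^ 2))).add
      (ENNReal.tendsto_ofReal (tendsto_const_div_atTop_nhds_zero_nat (4 / ε ^ 2)))
  refine tendsto_of_tendsto_of_tendsto_of_le_of_le' tendsto_const_nhds hbound
    (.of_forall fun _ => zero_le) ?_
  filter_upwards [eventually_measure_lt_orderStat_div_le hα hT hδ hZT hZ hindep hcov hε,
    eventually_measure_orderStat_div_lt_le hα hT hδ hZ hindep hcov hε] with n hupper hlower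
  refine (measure_mono fun ω hω => ?_).trans
    ((measure_union_le _ _).trans (add_le_add hupper hlower))
  rcases lt_abs.mp (Set.mem_ofPred_eq ▸ hω) with h | h
  · exact Or.inl (by simp only [Set.mem_ofPred_eq]; linarith)
  · exact Or.inr (by simp only [Set.mem_ofPred_eq]; linarith)

end OrderStatisticConsistency

theorem measurable_indexed_apply {β γ : Type*} [MeasurableSpace β] [MeasurableSpace γ]
    {f : β → ℕ} (hf : Measurable f) {g : ℕ → β → γ} {m : ℕ} (hg : ∀ j ≤ m, Measurable (g j))
    (hfm : ∀ x, f x ≤ m) : Measurable fun x => g (f x) x := by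
  have hclamp : Measurable fun p : β × ℕ => g (min p.2 m) p.1 :=
    measurable_from_prod_countable_left fun j => hg _ (min_le_right j m)
  convert hclamp.comp (measurable_id.prodMk hf) using 2 with x
  simp [hfm x]

theorem measurableSet_setOf_snd_mem_Ioc {β : Type*} [MeasurableSpace β] {a b : β → ℝ}
    (ha : Measurable a) (hb : Measurable b) :
    MeasurableSet {z : β × ℝ | z.2 ∈ Set.Ioc (a z.1) (b z.1)} :=
  (measurableSet_lt (ha.comp measurable_fst) measurable_snd).inter
    (measurableSet_le measurable_snd (hb.comp measurable_fst))

theorem measurableSet_setOf_snd_mem_Ioc_indexed {β : Type*} [MeasurableSpace β] {T : ℕ}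
    {q : ℕ → β → ℝ} (hq : ∀ t ≤ T, Measurable (q t)) {l : β → ℕ} (hl : Measurable l) {k : ℕ}
    (hlk : ∀ x, l x + k ≤ T) :
    MeasurableSet {z : β × ℝ | z.2 ∈ Set.Ioc (q (l z.1) z.1) (q (l z.1 + k) z.1)} :=
  measurableSet_setOf_snd_mem_Ioc
    (measurable_indexed_apply hl hq fun x => (Nat.le_add_right _ _).trans (hlk x))
    (measurable_indexed_apply (hl.add_const k) hq hlk)

theorem tendsto_natCeil_inv_atTop {ρ : ℕ → ℝ} (hρ : ∀ n, 0 < ρ n)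
    (hρ0 : Tendsto ρ atTop (nhds 0)) : Tendsto (fun n => ⌈(ρ n)⁻¹⌉₊) atTop atTop :=
  tendsto_nat_ceil_atTop.comp (tendsto_inv_nhdsGT_zero.comp
    (tendsto_nhdsWithin_iff.mpr ⟨hρ0, .of_forall hρ⟩))

theorem natCeil_inv_add_one_mul_sq_le {ρ : ℝ} (hρ : 0 < ρ) (hρ1 : ρ ≤ 1) :
    ((⌈ρ⁻¹⌉₊ : ℝ) + 1) * ρ ^ 2 ≤ 3 * ρ := by
  have hceil : (⌈ρ⁻¹⌉₊ : ℝ) + 1 ≤ ρ⁻¹ + 2 := by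
    linarith [Nat.ceil_lt_add_one (inv_pos.mpr hρ).le]
  calc ((⌈ρ⁻¹⌉₊ : ℝ) + 1) * ρ ^ 2 ≤ (ρ⁻¹ + 2) * ρ ^ 2 := by gcongr
    _ = ρ + 2 * ρ ^ 2 := by field_simp
    _ ≤ 3 * ρ := by nlinarith

section ConditionalCDF

variable {γ : Type*} [MeasurableSpace γ] (μ : Measure (γ × ℝ))

theorem measurable_condCDF_comp {g : γ → ℝ} (hg : Measurable g) :
    Measurable fun x => condCDF μ x (g x) := by
  let κ : Kernel γ ℝ := ⟨fun x => (condCDF μ x).measure, measurable_measure_condCDF μ⟩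
  have : IsMarkovKernel κ :=
    ⟨fun x => inferInstanceAs (IsProbabilityMeasure (condCDF μ x).measure)⟩
  convert (Kernel.measurable_kernel_prodMk_left (κ := κ)
    (measurableSet_le measurable_snd (hg.comp measurable_fst))).ennreal_toReal using 1
  funext x
  change _ = ((condCDF μ x).measure (Set.Iic (g x))).toReal
  rw [measure_condCDF_Iic, ENNReal.toReal_ofReal (condCDF_nonneg μ x _)]

noncomputable def calibrationError (T : ℕ) (q : ℕ → γ → ℝ) (c : γ → ℕ) (x : γ) : ℝ :=
  (c x : ℝ) / T - condCDF μ x (q (c x) x)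

variable {T : ℕ} {q : ℕ → γ → ℝ}

theorem abs_calibrationError_le_one {c : γ → ℕ} (hcT : ∀ x, c x ≤ T) (x : γ) :
    |calibrationError μ T q c x| ≤ 1 := by
  have h1 : (c x : ℝ) / T ≤ 1 := div_le_one_of_le₀ (by exact_mod_cast hcT x) T.cast_nonneg
  have h0 : 0 ≤ (c x : ℝ) / T := by positivity
  rw [calibrationError, abs_le]
  constructor <;> linarith [condCDF_nonneg μ x (q (c x) x), condCDF_le_one μ x (q (c x) x)]

theorem measurable_calibrationError (hq : ∀ t ≤ T, Measurable (q t)) {c : γ → ℕ}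
    (hc : Measurable c) (hcT : ∀ x, c x ≤ T) : Measurable (calibrationError μ T q c) :=
  ((measurable_from_nat.comp hc).div_const _).sub
    (measurable_condCDF_comp μ (measurable_indexed_apply hc hq hcT))

variable [IsFiniteMeasure μ]

theorem memLp_calibrationError (hq : ∀ t ≤ T, Measurable (q t)) {c : γ → ℕ}
    (hc : Measurable c) (hcT : ∀ x, c x ≤ T) (p : ENNReal) :
    MemLp (calibrationError μ T q c) p μ.fst :=
  .of_bound (measurable_calibrationError μ hq hc hcT).aestronglyMeasurable 1
    (.of_forall (abs_calibrationError_le_one μ hcT))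

theorem measureReal_setOf_snd_mem_Ioc {a b : γ → ℝ} (ha : Measurable a) (hb : Measurable b)
    (hab : ∀ x, a x ≤ b x) :
    μ.real {z | z.2 ∈ Set.Ioc (a z.1) (b z.1)}
      = ∫ x, (condCDF μ x (b x) - condCDF μ x (a x)) ∂μ.fst := by
  have hdisint := lintegral_toKernel_mem (isCondKernelCDF_condCDF μ) ()
    (measurableSet_setOf_snd_mem_Ioc ha hb)
  simp only [Kernel.const_apply, IsCondKernelCDF.toKernel_apply] at hdisint
  rw [measureReal_def, ← hdisint, integral_eq_lintegral_of_nonneg_ae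
    (.of_forall fun x => sub_nonneg.mpr ((condCDF μ x).mono (hab x)))
    ((measurable_condCDF_comp μ hb).sub (measurable_condCDF_comp μ ha)).aestronglyMeasurable]
  congr 2 with x
  exact (condCDF μ x).measure_Ioc (a x) (b x)

variable [IsProbabilityMeasure μ] {η : ℝ}

theorem abs_integral_calibrationError_le (hq : ∀ t ≤ T, Measurable (q t))
    (hcons : ∀ t ≤ T, ∫ x, ((t : ℝ) / T - condCDF μ x (q t x)) ^ 2 ∂μ.fst ≤ η)
    {c : γ → ℕ} (hc : Measurable c) (hcT : ∀ x, c x ≤ T) :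
    |∫ x, calibrationError μ T q c x ∂μ.fst| ≤ √((T + 1) * η) := by
  set e := calibrationError μ T q c
  have he := memLp_calibrationError μ hq hc hcT 2
  have hlevel : ∀ t ∈ Finset.range (T + 1),
      Integrable (fun x => ((t : ℝ) / T - condCDF μ x (q t x)) ^ 2) μ.fst := fun t ht =>
    (memLp_calibrationError μ hq (c := fun _ => t) measurable_const
      (fun _ => Nat.lt_succ_iff.mp (Finset.mem_range.mp ht)) 2).integrable_sq
  have hjensen : (∫ x, e x ∂μ.fst) ^ 2 ≤ ∫ x, e x ^ 2 ∂μ.fst := by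
    have h := variance_nonneg e μ.fst
    rw [variance_eq_sub he] at h
    simp only [Pi.pow_apply] at h
    linarith
  have hsum : ∫ x, e x ^ 2 ∂μ.fst ≤ (T + 1) * η := calc
    ∫ x, e x ^ 2 ∂μ.fst
        ≤ ∫ x, ∑ t ∈ Finset.range (T + 1), ((t : ℝ) / T - condCDF μ x (q t x)) ^ 2 ∂μ.fst :=
      integral_mono he.integrable_sq (integrable_finsetSum _ hlevel) fun x =>
        Finset.single_le_sum (f := fun t : ℕ => ((t : ℝ) / T - condCDF μ x (q t x)) ^ 2)
          (fun t _ => sq_nonneg _) (Finset.mem_range.mpr (Nat.lt_succ_of_le (hcT x)))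
    _ = ∑ t ∈ Finset.range (T + 1), ∫ x, ((t : ℝ) / T - condCDF μ x (q t x)) ^ 2 ∂μ.fst :=
      integral_finsetSum _ hlevel
    _ ≤ ∑ _t ∈ Finset.range (T + 1), η :=
      Finset.sum_le_sum fun t ht => hcons t (Nat.lt_succ_iff.mp (Finset.mem_range.mp ht))
    _ = (T + 1) * η := by simp
  calc |∫ x, e x ∂μ.fst| = √((∫ x, e x ∂μ.fst) ^ 2) := (Real.sqrt_sq_eq_abs _).symm
    _ ≤ √((T + 1) * η) := Real.sqrt_le_sqrt (hjensen.trans hsum)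

theorem abs_measureReal_setOf_snd_mem_Ioc_sub_le (hq : ∀ t ≤ T, Measurable (q t))
    (hcons : ∀ t ≤ T, ∫ x, ((t : ℝ) / T - condCDF μ x (q t x)) ^ 2 ∂μ.fst ≤ η)
    {l : γ → ℕ} (hl : Measurable l) {k : ℕ} (hlk : ∀ x, l x + k ≤ T)
    (hmono : ∀ x, q (l x) x ≤ q (l x + k) x) :
    |μ.real {z | z.2 ∈ Set.Ioc (q (l z.1) z.1) (q (l z.1 + k) z.1)} - k / T|
      ≤ 2 * √((T + 1) * η) := by
  have hlT : ∀ x, l x ≤ T := fun x => (Nat.le_add_right _ _).trans (hlk x)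
  have hlk' : Measurable fun x => l x + k := hl.add_const k
  have hlo := (memLp_calibrationError μ hq hl hlT 1).integrable le_rfl
  have hhi := (memLp_calibrationError μ hq hlk' hlk 1).integrable le_rfl
  have hsplit : ∫ x, (condCDF μ x (q (l x + k) x) - condCDF μ x (q (l x) x)) ∂μ.fst
      = ∫ x, (calibrationError μ T q l x - calibrationError μ T q (fun x => l x + k) x
        + k / T) ∂μ.fst := by
    congr 1 with x
    simp only [calibrationError]
    push_cast
    ring
  rw [measureReal_setOf_snd_mem_Ioc μ (measurable_indexed_apply hl hq hlT)
      (measurable_indexed_apply hlk' hq hlk) hmono, hsplit,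
    integral_add (f := fun x => _ - _) (hlo.sub hhi) (integrable_const _),
    integral_sub hlo hhi]
  simp only [integral_const, probReal_univ, smul_eq_mul, one_mul, add_sub_cancel_right]
  exact (abs_sub _ _).trans ((add_le_add (abs_integral_calibrationError_le μ hq hcons hl hlT)
    (abs_integral_calibrationError_le μ hq hcons hlk' hlk)).trans_eq (two_mul _).symm)

theorem abs_measureReal_setOf_snd_mem_Ioc_sub_le_sqrt {ρ : ℝ} (hρ : ρ ∈ Set.Ioo 0 1)
    (hT : T = ⌈ρ⁻¹⌉₊) (hq : ∀ t ≤ T, Measurable (q t))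
    (hqmono : ∀ t < T, ∀ x, q t x ≤ q (t + 1) x)
    (hcons : ∀ t ≤ T, ∫ x, ((t : ℝ) / T - condCDF μ x (q t x)) ^ 2 ∂μ.fst ≤ ρ ^ 2)
    {l : γ → ℕ} (hl : Measurable l) {k : ℕ} (hlk : ∀ x, l x + k ≤ T) :
    |μ.real {z | z.2 ∈ Set.Ioc (q (l z.1) z.1) (q (l z.1 + k) z.1)} - k / T|
      ≤ 2 * √(3 * ρ) := by
  subst hT
  have hmono : ∀ x, MonotoneOn (fun t => q t x) (Set.Iic _) := fun x =>
    monotoneOn_of_le_add_one Set.ordConnected_Iic fun t _ _ ht => hqmono t ht x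
  refine (abs_measureReal_setOf_snd_mem_Ioc_sub_le μ hq hcons hl hlk fun x =>
    hmono x ((Nat.le_add_right _ _).trans (hlk x)) (hlk x) (Nat.le_add_right _ _)).trans ?_
  exact mul_le_mul_of_nonneg_left
    (Real.sqrt_le_sqrt (natCeil_inv_add_one_mul_sq_le hρ.1 hρ.2.le)) zero_le_two

end ConditionalCDF

section NestedSets

variable {β : Type*} {C : ℕ → Set β} {T κ : ℕ} {y : β}

theorem le_iff_mem_of_nested (hC : ∀ k, 1 ≤ k → k < T → C k ⊆ C (k + 1))
    (hmem : y ∈ C T → κ = sInf {k | 1 ≤ k ∧ y ∈ C k}) (hnot : y ∉ C T → κ = T)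
    {c : ℕ} (hc : 1 ≤ c) (hcT : c < T) :
    κ ≤ c ↔ y ∈ C c := by
  have hmono : MonotoneOn C (Set.Icc 1 T) :=
    monotoneOn_of_le_add_one Set.ordConnected_Icc fun k _ hk hk1 => hC k hk.1 hk1.2
  constructor
  · intro hκ
    by_cases hy : y ∈ C T
    · obtain ⟨hκ1, hyκ⟩ := Nat.sInf_mem (s := {k | 1 ≤ k ∧ y ∈ C k}) ⟨T, by omega, hy⟩
      rw [← hmem hy] at hκ1 hyκ
      exact hmono ⟨hκ1, by omega⟩ ⟨hc, hcT.le⟩ hκ hyκ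
    · have := hnot hy
      omega
  · intro hy
    rw [hmem (hmono ⟨hc, hcT.le⟩ ⟨by omega, le_rfl⟩ hcT.le hy)]
    exact Nat.sInf_le ⟨hc, hy⟩

theorem le_of_eq_sInf_or_eq (hT : 1 ≤ T)
    (hmem : y ∈ C T → κ = sInf {k | 1 ≤ k ∧ y ∈ C k}) (hnot : y ∉ C T → κ = T) : κ ≤ T := by
  by_cases hy : y ∈ C T
  · exact (hmem hy).trans_le (Nat.sInf_le ⟨hT, hy⟩)
  · exact (hnot hy).le

end NestedSets

theorem cir_threshold_asymptotic_optimality_general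
    {Ω : Type*} [MeasurableSpace Ω] (P : Measure Ω) [IsProbabilityMeasure P]
    (d : ℕ)
    (X : (n : ℕ) → Fin (n + 1) → Ω → (Fin d → ℝ))
    (Y : (n : ℕ) → Fin (n + 1) → Ω → ℝ)
    (μ : Measure ((Fin d → ℝ) × ℝ)) [IsProbabilityMeasure μ]
    (hmeas : ∀ n i, Measurable fun ω => (X n i ω, Y n i ω))
    (hident : ∀ n i, P.map (fun ω => (X n i ω, Y n i ω)) = μ)
    (hindep : ∀ n, 1 ≤ n →
      iIndepFun (fun (i : Fin (n + 1)) ω => (X n i ω, Y n i ω)) P)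
    (F : (Fin d → ℝ) → ℝ → ℝ)
    (hF : ∀ x y, F x y = condCDF μ x y)
    (ρ : ℕ → ℝ) (hρ : ∀ n, ρ n ∈ Set.Ioo (0 : ℝ) 1)
    (hρ0 : Tendsto ρ atTop (nhds 0))
    (T : ℕ → ℕ) (hT : ∀ n, T n = ⌈(ρ n)⁻¹⌉₊)
    (q : (n : ℕ) → ℕ → (Fin d → ℝ) → ℝ)
    (hqmeas : ∀ n t, t ≤ T n → Measurable (q n t))
    (hqmono : ∀ n t, t < T n → ∀ x, q n t x ≤ q n (t + 1) x)
    (hconsist : ∀ n, 1 ≤ n → ∀ t, t ≤ T n →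
      (∫ x, ((t : ℝ) / (T n) - F x (q n t x)) ^ 2 ∂μ.fst) ≤ (ρ n) ^ 2)
    (l : (n : ℕ) → ℕ → (Fin d → ℝ) → ℕ)
    (hlmeas : ∀ n k, 1 ≤ k → k ≤ T n → Measurable (l n k))
    (hlrange : ∀ n k, 1 ≤ k → k ≤ T n → ∀ x, l n k x + k ≤ T n)
    (C : (n : ℕ) → ℕ → (Fin d → ℝ) → Set ℝ)
    (hC : ∀ n k x, C n k x = Set.Ioc (q n (l n k x) x) (q n (l n k x + k) x))
    (hnested : ∀ n k, 1 ≤ k → k < T n → ∀ x, C n k x ⊆ C n (k + 1) x)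
    (α : ℝ) (hα : α ∈ Set.Ioo (0 : ℝ) 1)
    (ki : (n : ℕ) → Fin n → Ω → ℕ)
    (hki₁ : ∀ n (i : Fin n) ω,
      Y n i.castSucc ω ∈ C n (T n) (X n i.castSucc ω) →
        ki n i ω = sInf {k | 1 ≤ k ∧ Y n i.castSucc ω ∈ C n k (X n i.castSucc ω)})
    (hki₂ : ∀ n (i : Fin n) ω,
      Y n i.castSucc ω ∉ C n (T n) (X n i.castSucc ω) → ki n i ω = T n)
    (khat : (n : ℕ) → Ω → ℕ)
    (hkhat : ∀ n ω, khat n ω =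
      orderStat ⌈(1 - α) * (n + 1)⌉₊ (List.ofFn fun i : Fin n => ki n i ω)) :
    ∀ ε : ℝ, 0 < ε →
      Tendsto (fun n => P {ω | ε < |(khat n ω : ℝ) / (T n) - (1 - α)|})
        atTop (nhds 0) := by
  intro ε hε
  have hTtop : Tendsto T atTop atTop :=
    (funext hT : T = _) ▸ tendsto_natCeil_inv_atTop (fun n => (hρ n).1) hρ0
  have hδ : Tendsto (fun n => 2 * √(3 * ρ n)) atTop (nhds 0) := by
    simpa using (hρ0.const_mul 3).sqrt.const_mul 2
  have hAmeas : ∀ n c, 1 ≤ c → c ≤ T n →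
      MeasurableSet {z : (Fin d → ℝ) × ℝ | z.2 ∈ C n c z.1} := fun n c hc hcT => by
    simpa only [hC] using measurableSet_setOf_snd_mem_Ioc_indexed (hqmeas n)
      (hlmeas n c hc hcT) (hlrange n c hc hcT)
  have hevent : ∀ n c, 1 ≤ c → c < T n → ∀ i : Fin n, {ω | ki n i ω ≤ c}
      = (fun ω => (X n i.castSucc ω, Y n i.castSucc ω)) ⁻¹' {z | z.2 ∈ C n c z.1} :=
    fun n c hc hcT i => Set.ext fun ω =>
      le_iff_mem_of_nested (C := fun k => C n k (X n i.castSucc ω))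
        (fun k hk hkT => hnested n k hk hkT _) (hki₁ n i ω) (hki₂ n i ω) hc hcT
  simp only [hkhat]
  refine tendsto_measure_lt_abs_orderStat_div_sub hα hTtop hδ
    (fun n i ω => le_of_eq_sInf_or_eq (C := fun k => C n k (X n i.castSucc ω))
      (by rw [hT]; exact Nat.ceil_pos.mpr (inv_pos.mpr (hρ n).1)) (hki₁ n i ω) (hki₂ n i ω))
    (fun n c hc hcT i => hevent n c hc hcT i ▸ hmeas n _ (hAmeas n c hc hcT.le))
    (fun n c hc hcT i j hij => ?_) ?_ hε
  · dsimp only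
    rw [hevent n c hc hcT i, hevent n c hc hcT j]
    exact (indepFun_iff_indepSet_preimage (hmeas n _) (hmeas n _)).mp
      ((hindep n i.pos).indepFun ((Fin.castSucc_injective n).ne hij))
      _ _ (hAmeas n c hc hcT.le) (hAmeas n c hc hcT.le)
  · filter_upwards [eventually_ge_atTop 1] with n hn c hc hcT i
    rw [hevent n c hc hcT i, ← map_measureReal_apply (hmeas n _) (hAmeas n c hc hcT.le), hident]
    simpa only [hC] using abs_measureReal_setOf_snd_mem_Ioc_sub_le_sqrt μ (hρ n) (hT n)
      (hqmeas n) (hqmono n) (by simpa only [hF] using hconsist n hn) (hlmeas n c hc hcT.le)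
      (hlrange n c hc hcT.le)

/-- (Theorem 2, first claim: asymptotic optimality of the CIR threshold.) For each `n ≥ 1`,
let `(X_1,Y_1), …, (X_n,Y_n), (X,Y)` be i.i.d. pairs in `ℝ^d × ℝ` with common law `μ`, and
let `F(y|x)` be a regular conditional CDF of `Y` given `X = x` (the canonical one `condCDF μ`).
Let `ρ_n ∈ (0,1)`, `ρ_n → 0`, `T_n = ⌈ρ_n⁻¹⌉`, and fix measurable monotone estimated quantile
functions `q̂_0 ≤ … ≤ q̂_{T_n}` satisfying the consistency condition
`max_{0 ≤ t ≤ T_n} E[(t/T_n - F(q̂_t(X)|X))²] ≤ ρ_n²`. Fix measurable shortest-interval index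
functions `l_k : ℝ^d → {0,…,T_n-k}`, let `C_k(x) = (q̂_{l_k(x)}(x), q̂_{l_k(x)+k}(x)]`, and
assume nestedness `C_k(x) ⊆ C_{k+1}(x)` (unimodality). Let `α ∈ (0,1)`, let
`k_i = min {k : Y_i ∈ C_k(X_i)}` (with `k_i = T_n` if `Y_i ∉ C_{T_n}(X_i)`), and let `k̂_n`
be the `⌈(1-α)(n+1)⌉`-th smallest value among `k_1, …, k_n`. Then `k̂_n / T_n → 1 - α` in
probability: for every `ε > 0`, `lim_{n→∞} P[|k̂_n / T_n - (1 - α)| > ε] = 0`. -/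
theorem cir_threshold_asymptotic_optimality
    {Ω : Type*} [MeasurableSpace Ω] (P : Measure Ω) [IsProbabilityMeasure P]
    (d : ℕ)
    (X : (n : ℕ) → Fin (n + 1) → Ω → (Fin d → ℝ))
    (Y : (n : ℕ) → Fin (n + 1) → Ω → ℝ)
    (μ : Measure ((Fin d → ℝ) × ℝ)) [IsProbabilityMeasure μ]
    (hmeas : ∀ n i, Measurable fun ω => (X n i ω, Y n i ω))
    (hident : ∀ n i, P.map (fun ω => (X n i ω, Y n i ω)) = μ)
    (hindep : ∀ n, 1 ≤ n →
      iIndepFun (fun (i : Fin (n + 1)) ω => (X n i ω, Y n i ω)) P)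
    (F : (Fin d → ℝ) → ℝ → ℝ)
    (hF : ∀ x y, F x y = condCDF μ x y)
    (ρ : ℕ → ℝ) (hρ : ∀ n, ρ n ∈ Set.Ioo (0 : ℝ) 1)
    (hρ0 : Tendsto ρ atTop (nhds 0))
    (T : ℕ → ℕ) (hT : ∀ n, T n = ⌈(ρ n)⁻¹⌉₊)
    (q : (n : ℕ) → ℕ → (Fin d → ℝ) → ℝ)
    (hqmeas : ∀ n t, t ≤ T n → Measurable (q n t))
    (hqmono : ∀ n t, t < T n → ∀ x, q n t x ≤ q n (t + 1) x)
    (hconsist : ∀ n, 1 ≤ n → ∀ t, t ≤ T n →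
      (∫ x, ((t : ℝ) / (T n) - F x (q n t x)) ^ 2 ∂μ.fst) ≤ (ρ n) ^ 2)
    (l : (n : ℕ) → ℕ → (Fin d → ℝ) → ℕ)
    (hlmeas : ∀ n k, 1 ≤ k → k ≤ T n → Measurable (l n k))
    (hlrange : ∀ n k, 1 ≤ k → k ≤ T n → ∀ x, l n k x + k ≤ T n)
    (hlopt : ∀ n k, 1 ≤ k → k ≤ T n → ∀ x, ∀ l' : ℕ, l' + k ≤ T n →
      q n (l n k x + k) x - q n (l n k x) x ≤ q n (l' + k) x - q n l' x)
    (C : (n : ℕ) → ℕ → (Fin d → ℝ) → Set ℝ)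
    (hC : ∀ n k x, C n k x = Set.Ioc (q n (l n k x) x) (q n (l n k x + k) x))
    (hnested : ∀ n k, 1 ≤ k → k < T n → ∀ x, C n k x ⊆ C n (k + 1) x)
    (α : ℝ) (hα : α ∈ Set.Ioo (0 : ℝ) 1)
    (ki : (n : ℕ) → Fin n → Ω → ℕ)
    (hki₁ : ∀ n (i : Fin n) ω,
      Y n i.castSucc ω ∈ C n (T n) (X n i.castSucc ω) →
        ki n i ω = sInf {k | 1 ≤ k ∧ Y n i.castSucc ω ∈ C n k (X n i.castSucc ω)})
    (hki₂ : ∀ n (i : Fin n) ω,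
      Y n i.castSucc ω ∉ C n (T n) (X n i.castSucc ω) → ki n i ω = T n)
    (khat : (n : ℕ) → Ω → ℕ)
    (hkhat : ∀ n ω, khat n ω =
      orderStat ⌈(1 - α) * (n + 1)⌉₊ (List.ofFn fun i : Fin n => ki n i ω)) :
    ∀ ε : ℝ, 0 < ε →
      Tendsto (fun n => P {ω | ε < |(khat n ω : ℝ) / (T n) - (1 - α)|})
        atTop (nhds 0) :=
  cir_threshold_asymptotic_optimality_general P d X Y μ hmeas hident hindep F hF ρ hρ hρ0 T hT q
    hqmeas hqmono hconsist l hlmeas hlrange C hC hnested α hα ki hki₁ hki₂ khat hkhat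
end
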